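/- arXiv:1812.06174 — 4 statements merged into one kernel-verified Lean document; each statement's English description precedes it below -/
import Mathlib

section
/- Conversely, if every s-sparse vector c ∈ V^N is the unique minimizer of ‖z‖_{V,1} subject to Az = Ac, then A satisfies the Hilbert-valued null space property of order s: for all nonzero z in the kernel of A (acting on V^N) and all S with #S = s, ‖z_S‖_{V,1} < ‖z_{S^c}‖_{V,1}. -/
/-!
Split a kernel vector as `z = z_S + z_{Sᶜ}`. Then `z_S` is `s`-sparse, `-z_{Sᶜ}` has the same
measurements as `z_S`, and the two differ because `z ≠ 0`; so `z_S` being the unique minimizer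
gives `‖z_S‖_{V,1} < ‖-z_{Sᶜ}‖_{V,1} = ‖z_{Sᶜ}‖_{V,1}`.
-/

open Finset

section Restriction

variable {ι E : Type*}

lemma ncard_indicator_ne_zero_le [Zero E] (S : Finset ι) (z : ι → E) :
    Set.ncard {ν | (S : Set ι).indicator z ν ≠ 0} ≤ S.card := by
  rw [← Set.ncard_coe_finset S]
  exact Set.ncard_le_ncard (Set.support_indicator_subset) S.finite_toSet

lemma sum_norm_indicator [Fintype ι] [SeminormedAddCommGroup E] (S : Finset ι) (z : ι → E) :
    ∑ ν, ‖(S : Set ι).indicator z ν‖ = ∑ ν ∈ S, ‖z ν‖ := by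
  simp_rw [norm_indicator_eq_indicator_norm]
  exact sum_indicator_subset _ (subset_univ S)

lemma neg_indicator_compl_ne_indicator [AddGroup E] (S : Set ι) {z : ι → E} (hz : z ≠ 0) :
    -Sᶜ.indicator z ≠ S.indicator z := by
  intro h
  apply hz
  rw [← S.indicator_self_add_compl z, ← h, neg_add_cancel]

lemma sum_smul_neg_indicator_compl [Fintype ι] {R : Type*} [Ring R] [AddCommGroup E] [Module R E]
    (S : Set ι) (a : ι → R) {z : ι → E} (hz : ∑ ν, a ν • z ν = 0) :
    ∑ ν, a ν • (-Sᶜ.indicator z) ν = ∑ ν, a ν • S.indicator z ν := by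
  have hsplit : ∑ ν, a ν • S.indicator z ν + ∑ ν, a ν • Sᶜ.indicator z ν = 0 := by
    rw [← sum_add_distrib, ← hz]
    refine sum_congr rfl fun ν _ => ?_
    rw [← smul_add]
    exact congrArg _ (congrFun (S.indicator_self_add_compl z) ν)
  simp only [Pi.neg_apply, smul_neg, sum_neg_distrib]
  exact (eq_neg_of_add_eq_zero_left hsplit).symm

end Restriction

theorem unique_recovery_implies_nsp_general (V : Type*) [NormedAddCommGroup V]
    [InnerProductSpace ℝ V] (m N s : ℕ)
    (A : Matrix (Fin m) (Fin N) ℝ)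
    (hrec : ∀ c : Fin N → V, Set.ncard {ν | c ν ≠ 0} ≤ s →
      ∀ z : Fin N → V, (∀ i, ∑ ν, A i ν • z ν = ∑ ν, A i ν • c ν) → z ≠ c →
        ∑ ν, ‖c ν‖ < ∑ ν, ‖z ν‖) :
    ∀ z : Fin N → V, z ≠ 0 → (∀ i, ∑ ν, A i ν • z ν = 0) →
      ∀ S : Finset (Fin N), S.card = s →
        ∑ ν ∈ S, ‖z ν‖ < ∑ ν ∈ Sᶜ, ‖z ν‖ := by
  intro z hz hker S hS
  have hlt := hrec ((S : Set (Fin N)).indicator z) (hS ▸ ncard_indicator_ne_zero_le S z)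
    (-(S : Set (Fin N))ᶜ.indicator z)
    (fun i => sum_smul_neg_indicator_compl _ (A i) (hker i))
    (neg_indicator_compl_ne_indicator _ hz)
  simpa only [Pi.neg_apply, norm_neg, ← coe_compl, sum_norm_indicator] using hlt

/-- If every `s`-sparse Hilbert-valued vector is the unique `‖·‖_{V,1}`
minimizer subject to the measurement constraint, then `A` satisfies the
Hilbert-valued null space property of order `s`. -/
theorem unique_recovery_implies_nsp (V : Type*) [NormedAddCommGroup V]
    [InnerProductSpace ℝ V] [CompleteSpace V] (m N s : ℕ)
    (A : Matrix (Fin m) (Fin N) ℝ)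
    (hrec : ∀ c : Fin N → V, Set.ncard {ν | c ν ≠ 0} ≤ s →
      ∀ z : Fin N → V, (∀ i, ∑ ν, A i ν • z ν = ∑ ν, A i ν • c ν) → z ≠ c →
        ∑ ν, ‖c ν‖ < ∑ ν, ‖z ν‖) :
    ∀ z : Fin N → V, z ≠ 0 → (∀ i, ∑ ν, A i ν • z ν = 0) →
      ∀ S : Finset (Fin N), S.card = s →
        ∑ ν ∈ S, ‖z ν‖ < ∑ ν ∈ Sᶜ, ‖z ν‖ :=
  unique_recovery_implies_nsp_general V m N s A hrec
end

section
/- Stechkin's inequality: let (a_ν)_{ν∈F} be a nonnegative sequence in ℓ^p(F) for some 0 < p ≤ 2, and let σ_s(a)_2 denote the ℓ² norm of a minus its s largest entries. Then σ_s(a)_2 ≤ ‖a‖_{ℓ^p} · s^{1/2 − 1/p} for all s ≥ 1. -/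
/-- Stechkin's inequality: for a nonnegative sequence `a ∈ ℓ^p`, `0 < p ≤ 2`,
the error of best `s`-term approximation in `ℓ²` satisfies
`σ_s(a)_2 ≤ ‖a‖_{ℓ^p} · s^{1/2 − 1/p}`. -/
theorem stechkin_inequality {F : Type*} [Countable F] (p : ℝ) (hp : 0 < p)
    (hp2 : p ≤ 2) (a : F → ℝ) (ha : ∀ ν, 0 ≤ a ν)
    (hsum : Summable fun ν => a ν ^ p) (s : ℕ) (hs : 1 ≤ s) :
    sInf {x : ℝ | ∃ S : Finset F, S.card ≤ s ∧
        x = Real.sqrt (∑' ν : {ν // ν ∉ S}, (a ν.1) ^ 2)}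
      ≤ (∑' ν, a ν ^ p) ^ (1 / p) * (s : ℝ) ^ ((1 : ℝ) / 2 - 1 / p) := by
  have hA0 : 0 ≤ ∑' ν, a ν ^ p := tsum_nonneg fun ν => Real.rpow_nonneg (ha ν) p
  set A := ∑' ν, a ν ^ p with hAdef
  have hbdd : BddBelow {x : ℝ | ∃ S : Finset F, S.card ≤ s ∧
      x = Real.sqrt (∑' ν : {ν // ν ∉ S}, (a ν.1) ^ 2)} := by
    refine ⟨0, fun x hx => ?_⟩
    obtain ⟨S, -, rfl⟩ := hx
    exact Real.sqrt_nonneg _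
  have hs0 : (0:ℝ) < s := by exact_mod_cast Nat.lt_of_lt_of_le Nat.zero_lt_one hs
  have hRnn : 0 ≤ A ^ (1 / p) * (s : ℝ) ^ ((1 : ℝ) / 2 - 1 / p) :=
    mul_nonneg (Real.rpow_nonneg hA0 _) (Real.rpow_nonneg hs0.le _)
  rcases eq_or_lt_of_le hA0 with hA | hA
  · -- trivial case: all entries vanish
    have haz : ∀ ν, a ν = 0 := by
      intro ν
      have h1 : a ν ^ p ≤ 0 := by
        rw [hA]
        exact Summable.le_tsum hsum ν fun j _ => Real.rpow_nonneg (ha j) p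
      have h2 : a ν ^ p = 0 := le_antisymm h1 (Real.rpow_nonneg (ha ν) p)
      exact (Real.rpow_eq_zero (ha ν) hp.ne').mp h2
    refine le_trans (csInf_le hbdd ⟨∅, by simp, rfl⟩) ?_
    have : (∑' ν : {ν // ν ∉ (∅ : Finset F)}, (a ν.1) ^ 2) = 0 := by
      have : (fun ν : {ν // ν ∉ (∅ : Finset F)} => (a ν.1) ^ 2) = fun _ => 0 := by
        funext ν; rw [haz]; ring
      rw [this, tsum_zero]
    rw [this, Real.sqrt_zero]
    exact hRnn
  · set t : ℝ := (A / s) ^ (1 / p) with htdef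
    have htA : 0 < A / s := div_pos hA hs0
    have ht : 0 < t := Real.rpow_pos_of_pos htA _
    have htp : t ^ p = A / s := by
      rw [htdef, ← Real.rpow_mul htA.le, one_div, inv_mul_cancel₀ hp.ne', Real.rpow_one]
    have hev : ∀ᶠ ν in Filter.cofinite, a ν ^ p < t ^ p :=
      hsum.tendsto_cofinite_zero.eventually_lt_const (by rw [htp]; exact htA)
    have hfin : {ν | t < a ν}.Finite := by
      refine (Filter.eventually_cofinite.mp hev).subset ?_
      intro ν hν
      simp only [Set.mem_setOf_eq, not_lt]
      exact Real.rpow_le_rpow ht.le (le_of_lt hν) hp.le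
    set S : Finset F := hfin.toFinset with hSdef
    have hmem : ∀ ν, ν ∈ S ↔ t < a ν := fun ν => hfin.mem_toFinset
    have hcardR : (S.card : ℝ) * (A / s) ≤ (s : ℝ) * (A / s) := by
      calc (S.card : ℝ) * (A / s) = ∑ _ν ∈ S, (A / s) := by
            rw [Finset.sum_const, nsmul_eq_mul]
        _ ≤ ∑ ν ∈ S, a ν ^ p := by
            refine Finset.sum_le_sum fun ν hν => ?_
            rw [← htp]
            exact Real.rpow_le_rpow ht.le ((hmem ν).1 hν).le hp.le
        _ ≤ A := Summable.sum_le_tsum S (fun ν _ => Real.rpow_nonneg (ha ν) p) hsum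
        _ = (s : ℝ) * (A / s) := by field_simp
    have hcard : S.card ≤ s := by
      have : (S.card : ℝ) ≤ (s : ℝ) := le_of_mul_le_mul_right hcardR htA
      exact_mod_cast this
    refine le_trans (csInf_le hbdd ⟨S, hcard, rfl⟩) ?_
    -- pointwise bound on the tail
    have hptw : ∀ ν : {ν // ν ∉ S}, (a ν.1) ^ 2 ≤ t ^ (2 - p) * a ν.1 ^ p := by
      rintro ⟨ν, hν⟩
      have haν : a ν ≤ t := le_of_not_gt fun h => hν ((hmem ν).2 h)
      have h2 : (a ν) ^ 2 = a ν ^ ((2 : ℝ) - p) * a ν ^ p := by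
        rw [← Real.rpow_natCast (a ν) 2, show ((2 : ℕ) : ℝ) = (2 - p) + p by push_cast; ring,
          Real.rpow_add' (ha ν) (by norm_num)]
      rw [h2]
      exact mul_le_mul_of_nonneg_right
        (Real.rpow_le_rpow (ha ν) haν (by linarith)) (Real.rpow_nonneg (ha ν) p)
    have hsub : Summable fun ν : {ν // ν ∉ S} => a ν.1 ^ p := hsum.subtype _
    have hsq : Summable fun ν : {ν // ν ∉ S} => (a ν.1) ^ 2 :=
      Summable.of_nonneg_of_le (fun ν => sq_nonneg _) hptw (hsub.mul_left _)
    have htail : (∑' ν : {ν // ν ∉ S}, a ν.1 ^ p) ≤ A :=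
      Summable.tsum_le_tsum_of_inj (Subtype.val) Subtype.val_injective
        (fun c _ => Real.rpow_nonneg (ha c) p) (fun b => le_refl _) hsub hsum
    have h1 : (∑' ν : {ν // ν ∉ S}, (a ν.1) ^ 2) ≤ t ^ (2 - p) * A := by
      calc (∑' ν : {ν // ν ∉ S}, (a ν.1) ^ 2)
          ≤ ∑' ν : {ν // ν ∉ S}, t ^ (2 - p) * a ν.1 ^ p :=
            Summable.tsum_le_tsum hptw hsq (hsub.mul_left _)
        _ = t ^ (2 - p) * ∑' ν : {ν // ν ∉ S}, a ν.1 ^ p := tsum_mul_left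
        _ ≤ t ^ (2 - p) * A :=
            mul_le_mul_of_nonneg_left htail (Real.rpow_nonneg ht.le _)
    have key : t ^ (2 - p) * A = A ^ (2 / p) * (s : ℝ) ^ (1 - 2 / p) := by
      rw [htdef, ← Real.rpow_mul htA.le, show (1 / p) * (2 - p) = (2 - p) / p by ring,
        Real.div_rpow hA0 hs0.le, div_mul_eq_mul_div, ← Real.rpow_add_one hA.ne',
        show (2 - p) / p + 1 = 2 / p by field_simp; ring,
        div_eq_iff (ne_of_gt (Real.rpow_pos_of_pos hs0 _)), mul_assoc,
        ← Real.rpow_add hs0, show 1 - 2 / p + (2 - p) / p = 0 by field_simp; ring,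
        Real.rpow_zero, mul_one]
    calc Real.sqrt (∑' ν : {ν // ν ∉ S}, (a ν.1) ^ 2)
        ≤ Real.sqrt (A ^ (2 / p) * (s : ℝ) ^ (1 - 2 / p)) :=
          Real.sqrt_le_sqrt (key ▸ h1)
      _ = A ^ (1 / p) * (s : ℝ) ^ ((1 : ℝ) / 2 - 1 / p) := by
          rw [show A ^ (2 / p) = (A ^ (1 / p)) ^ 2 by
              rw [← Real.rpow_natCast (A ^ (1 / p)) 2, ← Real.rpow_mul hA0]; norm_num; ring_nf,
            show (s : ℝ) ^ (1 - 2 / p) = ((s : ℝ) ^ ((1 : ℝ) / 2 - 1 / p)) ^ 2 by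
              rw [← Real.rpow_natCast ((s:ℝ) ^ ((1:ℝ)/2 - 1/p)) 2, ← Real.rpow_mul hs0.le]
              norm_num; ring_nf,
            ← mul_pow, Real.sqrt_sq hRnn]
end

section
/- Let V be a Hilbert space and suppose A ∈ ℝ^{m×N} satisfies the ℓ_{V,2}-robust null space property of order s with constants 0 < ρ < 1 and τ > 0: ‖z_S‖_{V,2} ≤ (ρ/√s)‖z_{S^c}‖_{V,1} + τ‖Az‖_{V,2} for all z ∈ V^N and all S with #S ≤ s. Then for any c ∈ V^N, u = Ac + e with ‖e‖_{V,2} ≤ ε, and any minimizer c# of ‖z‖_{V,1} subject to ‖Az − u‖_{V,2} ≤ ε, one has ‖c − c#‖_{V,2} ≤ (C₁/√s)·σ_s(c)_{V,1} + C₂·ε, where C₁, C₂ > 0 depend only on ρ and τ. -/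
lemma l2_triangle {ι V : Type*} [Fintype ι] [NormedAddCommGroup V] (x y : ι → V) :
    Real.sqrt (∑ i, ‖x i + y i‖ ^ 2) ≤
      Real.sqrt (∑ i, ‖x i‖ ^ 2) + Real.sqrt (∑ i, ‖y i‖ ^ 2) := by
  have h := norm_add_le ((WithLp.equiv 2 (∀ _ : ι, V)).symm x)
    ((WithLp.equiv 2 (∀ _ : ι, V)).symm y)
  simpa [PiLp.norm_eq_of_L2] using h

lemma l2_le_l1 {ι : Type*} [Fintype ι] (f : ι → ℝ) (hf : ∀ i, 0 ≤ f i) :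
    Real.sqrt (∑ i, f i ^ 2) ≤ ∑ i, f i := by
  rw [show (∑ i, f i) = Real.sqrt ((∑ i, f i) ^ 2) by
    rw [Real.sqrt_sq (Finset.sum_nonneg fun i _ => hf i)]]
  apply Real.sqrt_le_sqrt
  calc ∑ i, f i ^ 2 ≤ ∑ i, f i * ∑ j, f j := by
        refine Finset.sum_le_sum fun i _ => ?_
        rw [sq]
        exact mul_le_mul_of_nonneg_left
          (Finset.single_le_sum (fun j _ => hf j) (Finset.mem_univ i)) (hf i)
    _ = (∑ i, f i) ^ 2 := by rw [← Finset.sum_mul, sq]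

/-- Under the `ℓ_{V,2}`-robust null space property of order `s` with constants
`ρ, τ`, any minimizer `c#` of `‖·‖_{V,1}` subject to `‖Az − u‖_{V,2} ≤ ε`,
where `u = Ac + e` with `‖e‖_{V,2} ≤ ε`, satisfies
`‖c − c#‖_{V,2} ≤ (C₁/√s)·σ_s(c)_{V,1} + C₂·ε` with `C₁, C₂` depending only
on `ρ` and `τ`. -/
theorem robust_nsp_l2_error_bound (s : ℕ) (hs : 0 < s) (ρ τ : ℝ)
    (hρ0 : 0 < ρ) (hρ1 : ρ < 1) (hτ : 0 < τ) :
    ∃ C₁ C₂ : ℝ, 0 < C₁ ∧ 0 < C₂ ∧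
      ∀ (V : Type) (_ : NormedAddCommGroup V) (_ : InnerProductSpace ℝ V)
        (_ : CompleteSpace V) (m N : ℕ) (A : Matrix (Fin m) (Fin N) ℝ),
      (∀ (z : Fin N → V) (S : Finset (Fin N)), S.card ≤ s →
          Real.sqrt (∑ ν ∈ S, ‖z ν‖ ^ 2)
            ≤ ρ / Real.sqrt s * ∑ ν ∈ Sᶜ, ‖z ν‖
              + τ * Real.sqrt (∑ i, ‖∑ ν, A i ν • z ν‖ ^ 2)) →
      ∀ (c : Fin N → V) (e : Fin m → V) (ε : ℝ), Real.sqrt (∑ i, ‖e i‖ ^ 2) ≤ ε →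
      ∀ c' : Fin N → V,
        Real.sqrt (∑ i, ‖(∑ ν, A i ν • c' ν) - (∑ ν, A i ν • c ν + e i)‖ ^ 2) ≤ ε →
        (∀ z : Fin N → V,
          Real.sqrt (∑ i, ‖(∑ ν, A i ν • z ν) - (∑ ν, A i ν • c ν + e i)‖ ^ 2) ≤ ε →
          ∑ ν, ‖c' ν‖ ≤ ∑ ν, ‖z ν‖) →
        Real.sqrt (∑ ν, ‖c ν - c' ν‖ ^ 2)
          ≤ C₁ / Real.sqrt s *
              sInf {x : ℝ | ∃ c'' : Fin N → V,
                Set.ncard {ν | c'' ν ≠ 0} ≤ s ∧ x = ∑ ν, ‖c ν - c'' ν‖}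
            + C₂ * ε := by
  have hss : (0:ℝ) < Real.sqrt s := Real.sqrt_pos.mpr (by exact_mod_cast hs)
  have h1ρ : (0:ℝ) < 1 - ρ := by linarith
  refine ⟨Real.sqrt s * (2 * (1 + ρ) / (1 - ρ)), 4 * τ * Real.sqrt s / (1 - ρ),
    by positivity, by positivity, ?_⟩
  intro V _ _ _ m N A hNSP c e ε he c' hfeas hmin
  have hC₁ : Real.sqrt s * (2 * (1 + ρ) / (1 - ρ)) / Real.sqrt s
      = 2 * (1 + ρ) / (1 - ρ) := by
    field_simp
  rw [hC₁]
  have hε0 : (0:ℝ) ≤ ε := le_trans (Real.sqrt_nonneg _) he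
  set v : Fin N → V := fun ν => c' ν - c ν with hv
  -- ‖A v‖₂ ≤ 2 ε
  have hAv : Real.sqrt (∑ i, ‖∑ ν, A i ν • v ν‖ ^ 2) ≤ 2 * ε := by
    have hpt : ∀ i, (∑ ν, A i ν • v ν)
        = ((∑ ν, A i ν • c' ν) - (∑ ν, A i ν • c ν + e i)) + e i := by
      intro i
      simp [hv, smul_sub, Finset.sum_sub_distrib]
      abel
    calc Real.sqrt (∑ i, ‖∑ ν, A i ν • v ν‖ ^ 2)
        = Real.sqrt (∑ i, ‖((∑ ν, A i ν • c' ν) - (∑ ν, A i ν • c ν + e i)) + e i‖ ^ 2) := by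
          simp_rw [hpt]
      _ ≤ Real.sqrt (∑ i, ‖(∑ ν, A i ν • c' ν) - (∑ ν, A i ν • c ν + e i)‖ ^ 2)
            + Real.sqrt (∑ i, ‖e i‖ ^ 2) := l2_triangle _ _
      _ ≤ ε + ε := add_le_add hfeas he
      _ = 2 * ε := by ring
  -- minimality: c is feasible
  have hmin' : ∑ ν, ‖c' ν‖ ≤ ∑ ν, ‖c ν‖ := by
    apply hmin
    have : ∀ i, (∑ ν, A i ν • c ν) - (∑ ν, A i ν • c ν + e i) = -e i := by
      intro i; abel
    simp_rw [this, norm_neg]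
    exact he
  set L := Real.sqrt (∑ ν, ‖c ν - c' ν‖ ^ 2) with hL
  set T := {x : ℝ | ∃ c'' : Fin N → V,
      Set.ncard {ν | c'' ν ≠ 0} ≤ s ∧ x = ∑ ν, ‖c ν - c'' ν‖} with hT
  have hTne : T.Nonempty := ⟨∑ ν, ‖c ν - 0‖, 0, by simp, by simp⟩
  -- key pointwise bound
  have key : ∀ x ∈ T, L ≤ 2 * (1 + ρ) / (1 - ρ) * x + 4 * τ * Real.sqrt s / (1 - ρ) * ε := by
    rintro x ⟨c'', hcard, rfl⟩
    set S : Finset (Fin N) := (Set.toFinite {ν | c'' ν ≠ 0}).toFinset with hS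
    have hScard : S.card ≤ s := by
      rwa [hS, ← Set.ncard_eq_toFinset_card _ (Set.toFinite _)]
    have hzero : ∀ ν ∈ Sᶜ, c'' ν = 0 := by
      intro ν hν
      have := Finset.mem_compl.mp hν
      simp [hS, Set.Finite.mem_toFinset] at this
      exact this
    set x := ∑ ν, ‖c ν - c'' ν‖ with hx
    have hx0 : 0 ≤ x := Finset.sum_nonneg fun ν _ => norm_nonneg _
    set a := ∑ ν ∈ S, ‖v ν‖ with ha
    set b := ∑ ν ∈ Sᶜ, ‖v ν‖ with hb
    have ha0 : 0 ≤ a := Finset.sum_nonneg fun ν _ => norm_nonneg _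
    have hb0 : 0 ≤ b := Finset.sum_nonneg fun ν _ => norm_nonneg _
    -- Cauchy-Schwarz : a ≤ √s * √(∑_S ‖v‖²)
    have hCS : a ≤ Real.sqrt s * Real.sqrt (∑ ν ∈ S, ‖v ν‖ ^ 2) := by
      have h := Real.sum_mul_le_sqrt_mul_sqrt S (fun _ => (1:ℝ)) (fun ν => ‖v ν‖)
      simp only [one_mul, one_pow] at h
      calc a ≤ Real.sqrt (∑ _ν ∈ S, (1:ℝ)) * Real.sqrt (∑ ν ∈ S, ‖v ν‖ ^ 2) := h
        _ ≤ Real.sqrt s * Real.sqrt (∑ ν ∈ S, ‖v ν‖ ^ 2) := by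
            apply mul_le_mul_of_nonneg_right _ (Real.sqrt_nonneg _)
            apply Real.sqrt_le_sqrt
            simp only [Finset.sum_const, nsmul_eq_mul, mul_one]
            exact_mod_cast hScard
    -- NSP ⇒ a ≤ ρ b + τ √s ‖Av‖
    have hNSPa : a ≤ ρ * b + τ * Real.sqrt s * Real.sqrt (∑ i, ‖∑ ν, A i ν • v ν‖ ^ 2) := by
      have h := hNSP v S hScard
      have := mul_le_mul_of_nonneg_left h hss.le
      calc a ≤ Real.sqrt s * Real.sqrt (∑ ν ∈ S, ‖v ν‖ ^ 2) := hCS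
        _ ≤ Real.sqrt s * (ρ / Real.sqrt s * b
              + τ * Real.sqrt (∑ i, ‖∑ ν, A i ν • v ν‖ ^ 2)) :=
            mul_le_mul_of_nonneg_left h hss.le
        _ = ρ * b + τ * Real.sqrt s * Real.sqrt (∑ i, ‖∑ ν, A i ν • v ν‖ ^ 2) := by
            field_simp
    -- cone constraint : b ≤ a + 2 * x
    have hcone : b ≤ a + 2 * x := by
      have hsplit : ∀ f : Fin N → ℝ, (∑ ν, f ν) = ∑ ν ∈ S, f ν + ∑ ν ∈ Sᶜ, f ν := by
        intro f; rw [Finset.sum_add_sum_compl]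
      have h1 : ∀ ν ∈ S, ‖c ν‖ - ‖v ν‖ ≤ ‖c' ν‖ := by
        intro ν _
        have h := norm_sub_le (c' ν) (c' ν - c ν)
        simp only [sub_sub_cancel] at h
        simp only [hv]
        linarith
      have h2 : ∀ ν ∈ Sᶜ, ‖v ν‖ - ‖c ν‖ ≤ ‖c' ν‖ := by
        intro ν _
        have h := norm_sub_le (c' ν) (c ν)
        simp only [hv]
        linarith
      have hxc : ∑ ν ∈ Sᶜ, ‖c ν‖ ≤ x := by
        have : ∀ ν ∈ Sᶜ, ‖c ν‖ = ‖c ν - c'' ν‖ := by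
          intro ν hν; rw [hzero ν hν, sub_zero]
        rw [Finset.sum_congr rfl this]
        exact Finset.sum_le_sum_of_subset_of_nonneg (Finset.subset_univ _)
          fun ν _ _ => norm_nonneg _
      have e1 : ∑ ν ∈ S, (‖c ν‖ - ‖v ν‖) ≤ ∑ ν ∈ S, ‖c' ν‖ := Finset.sum_le_sum h1
      have e2 : ∑ ν ∈ Sᶜ, (‖v ν‖ - ‖c ν‖) ≤ ∑ ν ∈ Sᶜ, ‖c' ν‖ := Finset.sum_le_sum h2
      have hcS : ∑ ν ∈ S, ‖c ν‖ + ∑ ν ∈ Sᶜ, ‖c ν‖ = ∑ ν, ‖c ν‖ := Finset.sum_add_sum_compl S _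
      have hc'S : ∑ ν ∈ S, ‖c' ν‖ + ∑ ν ∈ Sᶜ, ‖c' ν‖ = ∑ ν, ‖c' ν‖ := Finset.sum_add_sum_compl S _
      rw [Finset.sum_sub_distrib] at e1 e2
      linarith [hmin', hxc]
    -- L ≤ a + b
    have hLab : L ≤ a + b := by
      have h1 : L ≤ ∑ ν, ‖c ν - c' ν‖ :=
        l2_le_l1 (fun ν => ‖c ν - c' ν‖) fun ν => norm_nonneg _
      have h2 : ∀ ν, ‖c ν - c' ν‖ = ‖v ν‖ := fun ν => norm_sub_rev _ _
      rw [Finset.sum_congr rfl fun ν _ => h2 ν, ← Finset.sum_add_sum_compl S] at h1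
      exact h1
    have hD0 : 0 ≤ Real.sqrt (∑ i, ‖∑ ν, A i ν • v ν‖ ^ 2) := Real.sqrt_nonneg _
    rw [div_mul_eq_mul_div, div_mul_eq_mul_div, ← add_div, le_div_iff₀ h1ρ]
    have hts : 0 ≤ τ * Real.sqrt s := by positivity
    nlinarith [mul_le_mul_of_nonneg_left hAv hts, mul_le_mul_of_nonneg_left hcone hρ0.le,
      mul_nonneg hρ0.le hx0, mul_nonneg hρ0.le ha0]
  -- conclude via csInf
  have hbdd : BddBelow T := by
    refine ⟨(L - 4 * τ * Real.sqrt s / (1 - ρ) * ε) / (2 * (1 + ρ) / (1 - ρ)), ?_⟩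
    intro x hx
    have h := key x hx
    rw [div_le_iff₀ (by positivity)]
    linarith [mul_comm x (2 * (1 + ρ) / (1 - ρ))]
  have hinf : (L - 4 * τ * Real.sqrt s / (1 - ρ) * ε) / (2 * (1 + ρ) / (1 - ρ)) ≤ sInf T := by
    apply le_csInf hTne
    intro x hx
    have h := key x hx
    rw [div_le_iff₀ (by positivity)]
    linarith [mul_comm x (2 * (1 + ρ) / (1 - ρ))]
  rw [div_le_iff₀ (by positivity : (0:ℝ) < 2 * (1 + ρ) / (1 - ρ))] at hinf
  linarith [mul_comm (sInf T) (2 * (1 + ρ) / (1 - ρ))]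
end

section
/- With the same hypotheses (ℓ_{V,2}-robust NSP of order s with constants ρ, τ, data u = Ac + e with ‖e‖_{V,2} ≤ ε, and c# any minimizer of ‖z‖_{V,1} subject to ‖Az − u‖_{V,2} ≤ ε), the ℓ₁-type error bound holds: ‖c − c#‖_{V,1} ≤ C₁·σ_s(c)_{V,1} + C₂·√s·ε for constants C₁, C₂ depending only on ρ and τ. -/
/-- Under the `ℓ_{V,2}`-robust null space property of order `s` with constants
`ρ, τ`, any minimizer `c#` of `‖·‖_{V,1}` subject to `‖Az − u‖_{V,2} ≤ ε`,
where `u = Ac + e` with `‖e‖_{V,2} ≤ ε`, satisfies the `ℓ₁`-type bound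
`‖c − c#‖_{V,1} ≤ C₁·σ_s(c)_{V,1} + C₂·√s·ε` with `C₁, C₂` depending only on
`ρ` and `τ`. -/
theorem robust_nsp_l1_error_bound (s : ℕ) (hs : 0 < s) (ρ τ : ℝ)
    (hρ0 : 0 < ρ) (hρ1 : ρ < 1) (hτ : 0 < τ) :
    ∃ C₁ C₂ : ℝ, 0 < C₁ ∧ 0 < C₂ ∧
      ∀ (V : Type) (_ : NormedAddCommGroup V) (_ : InnerProductSpace ℝ V)
        (_ : CompleteSpace V) (m N : ℕ) (A : Matrix (Fin m) (Fin N) ℝ),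
      (∀ (z : Fin N → V) (S : Finset (Fin N)), S.card ≤ s →
          Real.sqrt (∑ ν ∈ S, ‖z ν‖ ^ 2)
            ≤ ρ / Real.sqrt s * ∑ ν ∈ Sᶜ, ‖z ν‖
              + τ * Real.sqrt (∑ i, ‖∑ ν, A i ν • z ν‖ ^ 2)) →
      ∀ (c : Fin N → V) (e : Fin m → V) (ε : ℝ), Real.sqrt (∑ i, ‖e i‖ ^ 2) ≤ ε →
      ∀ c' : Fin N → V,
        Real.sqrt (∑ i, ‖(∑ ν, A i ν • c' ν) - (∑ ν, A i ν • c ν + e i)‖ ^ 2) ≤ ε →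
        (∀ z : Fin N → V,
          Real.sqrt (∑ i, ‖(∑ ν, A i ν • z ν) - (∑ ν, A i ν • c ν + e i)‖ ^ 2) ≤ ε →
          ∑ ν, ‖c' ν‖ ≤ ∑ ν, ‖z ν‖) →
        ∑ ν, ‖c ν - c' ν‖
          ≤ C₁ *
              sInf {x : ℝ | ∃ c'' : Fin N → V,
                Set.ncard {ν | c'' ν ≠ 0} ≤ s ∧ x = ∑ ν, ‖c ν - c'' ν‖}
            + C₂ * Real.sqrt s * ε := by
  have h1ρ : (0:ℝ) < 1 - ρ := by linarith
  refine ⟨2 * (1 + ρ) / (1 - ρ), 4 * τ / (1 - ρ),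
    div_pos (by linarith) h1ρ, div_pos (by linarith) h1ρ, ?_⟩
  intro V _ _ _ m N A hNSP c e ε he c' hfeas hmin
  set C₁ : ℝ := 2 * (1 + ρ) / (1 - ρ) with hC₁
  set C₂ : ℝ := 4 * τ / (1 - ρ) with hC₂
  have h1ρ' : (0:ℝ) < 1 - ρ := by linarith
  have hC₁pos : 0 < C₁ := div_pos (by linarith) h1ρ'
  have hε0 : 0 ≤ ε := le_trans (Real.sqrt_nonneg _) he
  have hss : (0:ℝ) < Real.sqrt s := Real.sqrt_pos.mpr (by exact_mod_cast hs)
  -- minimality applied to z = c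
  have hmin' : ∑ ν, ‖c' ν‖ ≤ ∑ ν, ‖c ν‖ := by
    apply hmin c
    simpa using he
  -- bound on ‖A(c - c')‖₂
  set E : ℝ := Real.sqrt (∑ i, ‖∑ ν, A i ν • (c ν - c' ν)‖ ^ 2) with hE
  have hE2 : E ≤ 2 * ε := by
    have key : ∀ i, ∑ ν, A i ν • (c ν - c' ν)
        = -(((∑ ν, A i ν • c' ν) - ((∑ ν, A i ν • c ν) + e i)) + e i) := by
      intro i
      simp [smul_sub, Finset.sum_sub_distrib]
      abel
    let r : PiLp 2 (fun _ : Fin m => V) :=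
      WithLp.toLp 2 (fun i => (∑ ν, A i ν • c' ν) - ((∑ ν, A i ν • c ν) + e i))
    let e' : PiLp 2 (fun _ : Fin m => V) := WithLp.toLp 2 (fun i => e i)
    have : E = ‖-(r + e')‖ := by
      rw [PiLp.norm_eq_of_L2, hE]
      exact congrArg Real.sqrt (Finset.sum_congr rfl fun i _ => by rw [key i]; simp [r, e'])
    rw [this, norm_neg]
    calc ‖r + e'‖ ≤ ‖r‖ + ‖e'‖ := norm_add_le _ _
      _ ≤ ε + ε := by
          refine add_le_add ?_ ?_
          · rw [PiLp.norm_eq_of_L2]; exact hfeas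
          · rw [PiLp.norm_eq_of_L2]; exact he
      _ = 2 * ε := by ring
  -- key per-S bound
  have key : ∀ S : Finset (Fin N), S.card ≤ s →
      ∑ ν, ‖c ν - c' ν‖ ≤ C₁ * (∑ ν ∈ Sᶜ, ‖c ν‖) + C₂ * Real.sqrt s * ε := by
    intro S hS
    set v : Fin N → V := fun ν => c ν - c' ν with hv
    set P : ℝ := ∑ ν ∈ S, ‖v ν‖ with hP
    set Q : ℝ := ∑ ν ∈ Sᶜ, ‖v ν‖ with hQ
    set σ : ℝ := ∑ ν ∈ Sᶜ, ‖c ν‖ with hσ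
    have hσ0 : 0 ≤ σ := Finset.sum_nonneg fun _ _ => norm_nonneg _
    have hE0 : 0 ≤ E := Real.sqrt_nonneg _
    have hsplit : P + Q = ∑ ν, ‖v ν‖ := Finset.sum_add_sum_compl S _
    -- Cauchy-Schwarz: P ≤ √s * √(∑_S ‖v‖²)
    have hCS : P ≤ Real.sqrt s * Real.sqrt (∑ ν ∈ S, ‖v ν‖ ^ 2) := by
      have h1 : P ^ 2 ≤ (S.card : ℝ) * ∑ ν ∈ S, ‖v ν‖ ^ 2 :=
        sq_sum_le_card_mul_sum_sq
      have h2 : P ≤ Real.sqrt ((S.card : ℝ) * ∑ ν ∈ S, ‖v ν‖ ^ 2) := by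
        have := Real.sqrt_le_sqrt h1
        rwa [Real.sqrt_sq (Finset.sum_nonneg fun _ _ => norm_nonneg _)] at this
      refine h2.trans ?_
      rw [Real.sqrt_mul (Nat.cast_nonneg _)]
      have : Real.sqrt (S.card : ℝ) ≤ Real.sqrt s := Real.sqrt_le_sqrt (by exact_mod_cast hS)
      exact mul_le_mul_of_nonneg_right this (Real.sqrt_nonneg _)
    have hNS := hNSP v S hS
    have hPbound : P ≤ ρ * Q + τ * Real.sqrt s * E := by
      calc P ≤ Real.sqrt s * Real.sqrt (∑ ν ∈ S, ‖v ν‖ ^ 2) := hCS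
        _ ≤ Real.sqrt s * (ρ / Real.sqrt s * Q + τ * E) :=
            mul_le_mul_of_nonneg_left hNS (Real.sqrt_nonneg _)
        _ = ρ * Q + τ * Real.sqrt s * E := by
            field_simp
    -- Q ≤ 2σ + P
    have hQbound : Q ≤ 2 * σ + P := by
      have h1 : Q ≤ σ + ∑ ν ∈ Sᶜ, ‖c' ν‖ := by
        rw [hQ, hσ, ← Finset.sum_add_distrib]
        exact Finset.sum_le_sum fun ν _ => norm_sub_le _ _
      have h2 : ∑ ν ∈ S, ‖c ν‖ - ∑ ν ∈ S, ‖c' ν‖ ≤ P := by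
        rw [hP, ← Finset.sum_sub_distrib]
        exact Finset.sum_le_sum fun ν _ => norm_sub_norm_le _ _
      have h3 : (∑ ν ∈ S, ‖c' ν‖) + ∑ ν ∈ Sᶜ, ‖c' ν‖ = ∑ ν, ‖c' ν‖ :=
        Finset.sum_add_sum_compl S _
      have h4 : (∑ ν ∈ S, ‖c ν‖) + σ = ∑ ν, ‖c ν‖ := Finset.sum_add_sum_compl S _
      linarith
    rw [← hsplit]
    have hτs : 0 ≤ τ * Real.sqrt s := by positivity
    have hfinal : (1 - ρ) * (P + Q) ≤ 2 * (1 + ρ) * σ + 2 * (τ * Real.sqrt s * E) := by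
      nlinarith [hQbound, hPbound, hσ0]
    have hEε : 2 * (τ * Real.sqrt s * E) ≤ 4 * τ * (Real.sqrt s * ε) := by
      nlinarith [mul_le_mul_of_nonneg_left hE2 hτs]
    have hrhs : (1 - ρ) * (C₁ * σ + C₂ * Real.sqrt s * ε)
        = 2 * (1 + ρ) * σ + 4 * τ * (Real.sqrt s * ε) := by
      rw [hC₁, hC₂]; field_simp
    have hgoal : (1 - ρ) * (P + Q) ≤ (1 - ρ) * (C₁ * σ + C₂ * Real.sqrt s * ε) := by
      rw [hrhs]; linarith
    exact le_of_mul_le_mul_left hgoal h1ρ'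
  -- sInf argument
  set K : Set ℝ := {x : ℝ | ∃ c'' : Fin N → V,
    Set.ncard {ν | c'' ν ≠ 0} ≤ s ∧ x = ∑ ν, ‖c ν - c'' ν‖} with hK
  have hKne : K.Nonempty := by
    refine ⟨∑ ν, ‖c ν‖, 0, ?_, by simp⟩
    simp
  have hle : (∑ ν, ‖c ν - c' ν‖ - C₂ * Real.sqrt s * ε) / C₁ ≤ sInf K := by
    apply le_csInf hKne
    rintro x ⟨c'', hcard, rfl⟩
    have hfin : {ν | c'' ν ≠ 0}.Finite := Set.toFinite _
    set S : Finset (Fin N) := hfin.toFinset with hSdef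
    have hScard : S.card ≤ s := by
      rwa [← Set.ncard_eq_toFinset_card _ hfin]
    have hσle : ∑ ν ∈ Sᶜ, ‖c ν‖ ≤ ∑ ν, ‖c ν - c'' ν‖ := by
      calc ∑ ν ∈ Sᶜ, ‖c ν‖ = ∑ ν ∈ Sᶜ, ‖c ν - c'' ν‖ := by
            refine Finset.sum_congr rfl fun ν hν => ?_
            have : c'' ν = 0 := by
              by_contra h
              have : ν ∈ S := by simp [hSdef, Set.Finite.mem_toFinset, h]
              simp [Finset.mem_compl] at hν
              exact hν this
            rw [this, sub_zero]
        _ ≤ ∑ ν, ‖c ν - c'' ν‖ :=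
            Finset.sum_le_sum_of_subset_of_nonneg (Finset.subset_univ _)
              fun _ _ _ => norm_nonneg _
    have hk := key S hScard
    rw [div_le_iff₀ hC₁pos]
    nlinarith [hk, mul_le_mul_of_nonneg_left hσle hC₁pos.le]
  have h2 := mul_le_mul_of_nonneg_left hle hC₁pos.le
  rw [mul_div_cancel₀ _ (ne_of_gt hC₁pos)] at h2
  linarith
end
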